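/- arXiv:1308.2992 — 3 statements merged into one kernel-verified Lean document; each statement's English description precedes it below -/
import Mathlib

section
/- For every $\mathbf{a}=(a_1,\dots,a_m)\in\mathbb{Z}^m$ and every $\lambda\in\mathcal{P}$ one has $\Lambda_\mathbf{i}(\mathbf{a},\mathbf{a}_\lambda)=\big(|\mathbf{a}|,\ w_m\lambda+\lambda\big)$, where $|\mathbf{a}|=\sum_{k=1}^m a_k\alpha_{i_k}\in\mathcal{Q}$. -/
open Finset

/-- The weight lattice `𝒫`: the free abelian group with basis `{αᵢ, ωᵢ : i ∈ I}`,
represented by pairs of coefficient vectors (first component: coefficients of the `αᵢ`,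
second component: coefficients of the `ωᵢ`). -/
abbrev PLat (n : ℕ) := (Fin n → ℤ) × (Fin n → ℤ)

/-- The coroot lattice `𝒬^∨`: the free abelian group with basis `{αᵢ^∨ : i ∈ I}`,
represented by coefficient vectors. -/
abbrev QvLat (n : ℕ) := Fin n → ℤ

variable {n : ℕ}

/-- The basis element `α_j^∨` of `𝒬^∨`. -/
def coroot (j : Fin n) : QvLat n := fun k => if k = j then 1 else 0

/-- The basis element `α_j` of `𝒫`. -/
def alP (j : Fin n) : PLat n := (fun k => if k = j then 1 else 0, 0)

/-- The basis element `ω_j` of `𝒫`. -/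
def omP (j : Fin n) : PLat n := (0, fun k => if k = j then 1 else 0)

/-- The biadditive pairing `𝒬^∨ × 𝒫 → ℤ` with `(αᵢ^∨, α_j) = a_{ij}` and
`(αᵢ^∨, ω_j) = δ_{ij}`. -/
def pairQP (A : Fin n → Fin n → ℤ) (x : QvLat n) (lam : PLat n) : ℤ :=
  (∑ a, ∑ b, x a * A a b * lam.1 b) + ∑ a, x a * lam.2 a

/-- The simple reflection `sᵢ` on `𝒫`: `sᵢ α_j = α_j - a_{ij} αᵢ`,
`sᵢ ω_j = ω_j - δ_{ij} αᵢ`. -/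
def sP (A : Fin n → Fin n → ℤ) (a : Fin n) (lam : PLat n) : PLat n :=
  (fun j => if j = a then lam.1 a - ((∑ k, A a k * lam.1 k) + lam.2 a) else lam.1 j,
   lam.2)

/-- The simple reflection `sᵢ^∨` on `𝒬^∨`: `sᵢ^∨ α_j^∨ = α_j^∨ - a_{ji} αᵢ^∨`. -/
def sQ (A : Fin n → Fin n → ℤ) (a : Fin n) (x : QvLat n) : QvLat n :=
  fun j => if j = a then x a - ∑ k, A k a * x k else x j

/-- `w_ℓ = s_{i₁} ∘ ⋯ ∘ s_{i_ℓ}` on `𝒫` (with `w₀ = id`). -/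
def wP (A : Fin n → Fin n → ℤ) (ii : ℕ → Fin n) : ℕ → PLat n → PLat n
  | 0 => id
  | (l+1) => wP A ii l ∘ sP A (ii (l+1))

/-- `w_ℓ^∨ = s_{i₁}^∨ ∘ ⋯ ∘ s_{i_ℓ}^∨` on `𝒬^∨` (with `w₀ = id`). -/
def wQ (A : Fin n → Fin n → ℤ) (ii : ℕ → Fin n) : ℕ → QvLat n → QvLat n
  | 0 => id
  | (l+1) => wQ A ii l ∘ sQ A (ii (l+1))

/-- `k⁺ = min({ℓ : k < ℓ ≤ m, i_ℓ = i_k} ∪ {m+1})`. -/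
noncomputable def kplus (ii : ℕ → Fin n) (m k : ℕ) : ℕ :=
  sInf ({l | k < l ∧ l ≤ m ∧ ii l = ii k} ∪ {m+1})

/-- `k⁻ = max({ℓ : 1 ≤ ℓ < k, i_ℓ = i_k} ∪ {0})`. -/
noncomputable def kminus (ii : ℕ → Fin n) (k : ℕ) : ℕ :=
  sSup ({l | 1 ≤ l ∧ l < k ∧ ii l = ii k} ∪ {0})

/-- The standard basis vector `ε_k` of `ℤ^m` (1-based index), with the convention
`ε_s = 0` for `s ∉ {1,…,m}`. -/
def eps (m k : ℕ) : Fin m → ℤ := fun j => if (j : ℕ) + 1 = k then 1 else 0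

/-- `φ_𝐢(ε_k) = -ε_k - ε_{k⁻} - ∑_{ℓ : ℓ < k < ℓ⁺} a_{i_ℓ i_k} ε_ℓ`. -/
noncomputable def phiE (A : Fin n → Fin n → ℤ) (ii : ℕ → Fin n) (m k : ℕ) :
    Fin m → ℤ :=
  -(eps m k) - eps m (kminus ii k)
    - ∑ l : Fin m, (if (l:ℕ)+1 < k ∧ k < kplus ii m ((l:ℕ)+1)
        then A (ii ((l:ℕ)+1)) (ii k) else 0) • eps m ((l:ℕ)+1)

/-- The endomorphism `φ_𝐢` of `ℤ^m`, extended additively from its values on the basis. -/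
noncomputable def phiMap (A : Fin n → Fin n → ℤ) (ii : ℕ → Fin n) (m : ℕ)
    (v : Fin m → ℤ) : Fin m → ℤ :=
  ∑ k : Fin m, v k • phiE A ii m ((k:ℕ)+1)

/-- `φ'_𝐢(ε_ℓ) = -∑_{k=1}^{ℓ} (w_k^∨ α_{i_k}^∨, w_ℓ ω_{i_ℓ}) ε_k`. -/
def phiE' (A : Fin n → Fin n → ℤ) (ii : ℕ → Fin n) (m l : ℕ) : Fin m → ℤ :=
  -∑ k : Fin m, (if (k:ℕ)+1 ≤ l then
      pairQP A (wQ A ii ((k:ℕ)+1) (coroot (ii ((k:ℕ)+1)))) (wP A ii l (omP (ii l)))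
    else 0) • eps m ((k:ℕ)+1)

/-- The endomorphism `φ'_𝐢` of `ℤ^m`, extended additively from its values on the basis. -/
def phiMap' (A : Fin n → Fin n → ℤ) (ii : ℕ → Fin n) (m : ℕ)
    (v : Fin m → ℤ) : Fin m → ℤ :=
  ∑ l : Fin m, v l • phiE' A ii m ((l:ℕ)+1)

/-- `∂_𝐢 ε_k = ε_k - ε_{k⁻}`. -/
noncomputable def derE (ii : ℕ → Fin n) (m k : ℕ) : Fin m → ℤ :=
  eps m k - eps m (kminus ii k)

/-- The endomorphism `∂_𝐢` of `ℤ^m`. -/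
noncomputable def derMap (ii : ℕ → Fin n) (m : ℕ) (v : Fin m → ℤ) : Fin m → ℤ :=
  ∑ k : Fin m, v k • derE ii m ((k:ℕ)+1)

/-- `∫_𝐢 ε_k = ε_k + ε_{k⁻} + ε_{(k⁻)⁻} + ⋯` (summing along the chain `k > k⁻ > ⋯ > 0`). -/
noncomputable def intE (ii : ℕ → Fin n) (m : ℕ) (k : ℕ) : Fin m → ℤ :=
  if h : kminus ii k < k then eps m k + intE ii m (kminus ii k) else eps m k
termination_by k
decreasing_by exact h

/-- The endomorphism `∫_𝐢` of `ℤ^m`. -/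
noncomputable def intMap (ii : ℕ → Fin n) (m : ℕ) (v : Fin m → ℤ) : Fin m → ℤ :=
  ∑ k : Fin m, v k • intE ii m ((k:ℕ)+1)

/-- The skew-symmetric biadditive form `Λ_𝐢` on `ℤ^m` with
`Λ_𝐢(ε_k, ε_ℓ) = sgn(k-ℓ) c_{i_k i_ℓ}` where `c_{ij} = dᵢ a_{ij}`. -/
def LamF (A : Fin n → Fin n → ℤ) (d : Fin n → ℤ) (ii : ℕ → Fin n) (m : ℕ)
    (a b : Fin m → ℤ) : ℤ :=
  ∑ k : Fin m, ∑ l : Fin m, a k * b l *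
    ((((k:ℕ):ℤ) - ((l:ℕ):ℤ)).sign *
      (d (ii ((k:ℕ)+1)) * A (ii ((k:ℕ)+1)) (ii ((l:ℕ)+1))))

/-- The biadditive form `Φ_𝐢` on `ℤ^m` with `Φ_𝐢(ε_k,ε_ℓ) = -d_{i_k}` if `k = ℓ`,
`= -c_{i_ℓ i_k}` if `ℓ < k`, and `= 0` if `ℓ > k`. -/
def PhiF (A : Fin n → Fin n → ℤ) (d : Fin n → ℤ) (ii : ℕ → Fin n) (m : ℕ)
    (a b : Fin m → ℤ) : ℤ :=
  ∑ k : Fin m, ∑ l : Fin m, a k * b l *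
    (if (k:ℕ) = (l:ℕ) then -(d (ii ((k:ℕ)+1)))
     else if (l:ℕ) < (k:ℕ) then
       -(d (ii ((l:ℕ)+1)) * A (ii ((l:ℕ)+1)) (ii ((k:ℕ)+1)))
     else 0)

/-- The entry `b_{pk}` of the exchange matrix `B̃_𝐢`. -/
noncomputable def bcoef (A : Fin n → Fin n → ℤ) (ii : ℕ → Fin n) (m p k : ℕ) : ℤ :=
  if p = kminus ii k then -1
  else if p < k ∧ k < kplus ii m p ∧ kplus ii m p < kplus ii m k then
    -(A (ii p) (ii k))
  else if k < p ∧ p < kplus ii m k ∧ kplus ii m k < kplus ii m p then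
    A (ii p) (ii k)
  else if p = kplus ii m k then 1
  else 0

/-- The column `𝐛^k = ∑_p b_{pk} ε_p ∈ ℤ^m` of the exchange matrix. -/
noncomputable def bvec (A : Fin n → Fin n → ℤ) (ii : ℕ → Fin n) (m k : ℕ) :
    Fin m → ℤ :=
  fun p => bcoef A ii m ((p:ℕ)+1) k

/-- `ρ_𝐢⁺(ε_k) = ε_k + ∑_{ℓ<k, ℓ⁺=m+1} a_{i_ℓ i_k} ε_ℓ`. -/
noncomputable def rhoPE (A : Fin n → Fin n → ℤ) (ii : ℕ → Fin n) (m k : ℕ) :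
    Fin m → ℤ :=
  eps m k + ∑ l : Fin m, (if (l:ℕ)+1 < k ∧ kplus ii m ((l:ℕ)+1) = m+1
      then A (ii ((l:ℕ)+1)) (ii k) else 0) • eps m ((l:ℕ)+1)

/-- `ρ_𝐢⁻(ε_k) = ε_k - ∑_{ℓ≤k, ℓ⁺=m+1} a_{i_ℓ i_k} ε_ℓ`. -/
noncomputable def rhoME (A : Fin n → Fin n → ℤ) (ii : ℕ → Fin n) (m k : ℕ) :
    Fin m → ℤ :=
  eps m k - ∑ l : Fin m, (if (l:ℕ)+1 ≤ k ∧ kplus ii m ((l:ℕ)+1) = m+1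
      then A (ii ((l:ℕ)+1)) (ii k) else 0) • eps m ((l:ℕ)+1)

/-- The endomorphism `ρ_𝐢⁺` of `ℤ^m`. -/
noncomputable def rhoPMap (A : Fin n → Fin n → ℤ) (ii : ℕ → Fin n) (m : ℕ)
    (v : Fin m → ℤ) : Fin m → ℤ :=
  ∑ k : Fin m, v k • rhoPE A ii m ((k:ℕ)+1)

/-- The endomorphism `ρ_𝐢⁻` of `ℤ^m`. -/
noncomputable def rhoMMap (A : Fin n → Fin n → ℤ) (ii : ℕ → Fin n) (m : ℕ)
    (v : Fin m → ℤ) : Fin m → ℤ :=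
  ∑ k : Fin m, v k • rhoME A ii m ((k:ℕ)+1)

/-- `𝐚_λ = -∑_{k=1}^m (w_k^∨ α_{i_k}^∨, w_m λ) ε_k ∈ ℤ^m`. -/
def avec (A : Fin n → Fin n → ℤ) (ii : ℕ → Fin n) (m : ℕ) (lam : PLat n) :
    Fin m → ℤ :=
  fun k => -(pairQP A (wQ A ii ((k:ℕ)+1) (coroot (ii ((k:ℕ)+1)))) (wP A ii m lam))

/-- `|𝐚| = ∑_{k=1}^m a_k α_{i_k} ∈ 𝒬 ⊆ 𝒫`. -/
def degP (ii : ℕ → Fin n) (m : ℕ) (a : Fin m → ℤ) : PLat n :=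
  (fun j => ∑ k : Fin m, if ii ((k:ℕ)+1) = j then a k else 0, 0)

/-- The pairing `(μ, λ) = ∑ mᵢ dᵢ (αᵢ^∨, λ)` for `μ = ∑ mᵢ αᵢ ∈ 𝒬` and `λ ∈ 𝒫`
(induced by identifying `αᵢ` with `dᵢ αᵢ^∨`). -/
def pairAl (A : Fin n → Fin n → ℤ) (d : Fin n → ℤ) (mu lam : PLat n) : ℤ :=
  ∑ j, mu.1 j * (d j * pairQP A (coroot j) lam)

/-!
Put `t_ℓ = w_ℓ⁻¹ w_m λ = s_{i_ℓ} ⋯ s_{i_1} w_m λ`, so `t_0 = w_m λ`, `t_m = λ` and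
`t_ℓ = s_{i_ℓ} t_{ℓ-1}`. Since `s_i^∨` is the transpose of `s_i`, the `ℓ`-th coordinate
of `𝐚_λ` is `-(α_{i_ℓ}^∨, t_ℓ)`, and `t_ℓ - t_{ℓ-1} = (α_{i_ℓ}^∨, t_ℓ) α_{i_ℓ}` because
`(α_i^∨, s_i μ) = -(α_i^∨, μ)`. Hence `∑_ℓ sgn(k-ℓ) (𝐚_λ)_ℓ α_{i_ℓ}` telescopes to
`w_m λ + λ - t_{k-1} - t_k`, and `t_{k-1} + t_k = t_{k-1} + s_{i_k} t_{k-1}` pairs to zero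
with `α_{i_k}^∨`.
-/

section Pairing

variable {n : ℕ} (A : Fin n → Fin n → ℤ)

lemma pairQP_add (x : QvLat n) (p q : PLat n) :
    pairQP A x (p + q) = pairQP A x p + pairQP A x q := by
  simp only [pairQP, Prod.fst_add, Prod.snd_add, Pi.add_apply, mul_add, sum_add_distrib]
  ring

lemma pairQP_add_left (x y : QvLat n) (p : PLat n) :
    pairQP A (x + y) p = pairQP A x p + pairQP A y p := by
  simp only [pairQP, Pi.add_apply, add_mul, sum_add_distrib]
  ring

def pairQPRight (x : QvLat n) : PLat n →+ ℤ :=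
  AddMonoidHom.mk' (pairQP A x) (pairQP_add A x)

def pairQPLeft (p : PLat n) : QvLat n →+ ℤ :=
  AddMonoidHom.mk' (pairQP A · p) (pairQP_add_left A · · p)

lemma pairQP_sub (x : QvLat n) (p q : PLat n) :
    pairQP A x (p - q) = pairQP A x p - pairQP A x q :=
  (pairQPRight A x).map_sub p q

lemma pairQP_zsmul (x : QvLat n) (c : ℤ) (p : PLat n) :
    pairQP A x (c • p) = c * pairQP A x p :=
  map_zsmul (pairQPRight A x) c p

lemma pairQP_sum {β : Type*} (x : QvLat n) (s : Finset β) (f : β → PLat n) :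
    pairQP A x (∑ l ∈ s, f l) = ∑ l ∈ s, pairQP A x (f l) :=
  map_sum (pairQPRight A x) f s

lemma pairQP_sub_left (x y : QvLat n) (p : PLat n) :
    pairQP A (x - y) p = pairQP A x p - pairQP A y p :=
  (pairQPLeft A p).map_sub x y

lemma pairQP_zsmul_left (c : ℤ) (x : QvLat n) (p : PLat n) :
    pairQP A (c • x) p = c * pairQP A x p :=
  map_zsmul (pairQPLeft A p) c x

lemma pairQP_coroot (i : Fin n) (p : PLat n) :
    pairQP A (coroot i) p = (∑ b, A i b * p.1 b) + p.2 i := by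
  simp [pairQP, coroot, ite_mul, sum_ite_eq']

lemma pairQP_alP (x : QvLat n) (j : Fin n) :
    pairQP A x (alP j) = ∑ a, x a * A a j := by
  simp [pairQP, alP, mul_ite, sum_ite_eq']

lemma pairQP_coroot_alP (i j : Fin n) : pairQP A (coroot i) (alP j) = A i j := by
  simp [pairQP_alP, coroot, ite_mul, sum_ite_eq']

end Pairing

section Reflections

variable {n : ℕ} (A : Fin n → Fin n → ℤ)

lemma sQ_eq (i : Fin n) (x : QvLat n) :
    sQ A i x = x - (∑ k, A k i * x k) • coroot i := by
  funext j
  by_cases h : j = i <;> simp [sQ, coroot, h]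

lemma sP_eq (i : Fin n) (p : PLat n) :
    sP A i p = p - pairQP A (coroot i) p • alP i := by
  rw [pairQP_coroot]
  refine Prod.ext (funext fun j => ?_) ?_
  · by_cases h : j = i <;> simp [sP, alP, h]
  · simp [sP, alP]

lemma pairQP_sQ (i : Fin n) (x : QvLat n) (p : PLat n) :
    pairQP A (sQ A i x) p = pairQP A x (sP A i p) := by
  rw [sQ_eq, sP_eq, pairQP_sub_left, pairQP_zsmul_left, pairQP_sub, pairQP_zsmul,
    pairQP_alP]
  simp only [mul_comm (A _ i)]
  ring

variable {A} {i : Fin n} (hA : A i i = 2)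
include hA

lemma pairQP_coroot_sP (p : PLat n) :
    pairQP A (coroot i) (sP A i p) = -pairQP A (coroot i) p := by
  rw [sP_eq, pairQP_sub, pairQP_zsmul, pairQP_coroot_alP, hA]
  ring

lemma pairQP_coroot_sP_add_self (p : PLat n) :
    pairQP A (coroot i) (sP A i p + p) = 0 := by
  rw [pairQP_add, pairQP_coroot_sP hA, neg_add_cancel]

lemma sP_sP (p : PLat n) : sP A i (sP A i p) = p := by
  conv_lhs => rw [sP_eq A i (sP A i p), pairQP_coroot_sP hA, sP_eq]
  rw [neg_smul, sub_neg_eq_add, sub_add_cancel]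

lemma sP_sub_self (p : PLat n) :
    sP A i p - p = pairQP A (coroot i) (sP A i p) • alP i := by
  rw [pairQP_coroot_sP hA, neg_smul, sP_eq, sub_sub_cancel_left]

end Reflections

section ReversedWord

variable {n : ℕ} (A : Fin n → Fin n → ℤ) (ii : ℕ → Fin n)

def wRevP : ℕ → PLat n → PLat n
  | 0 => id
  | (l+1) => sP A (ii (l+1)) ∘ wRevP l

lemma wRevP_succ (l : ℕ) (p : PLat n) :
    wRevP A ii (l+1) p = sP A (ii (l+1)) (wRevP A ii l p) := rfl

lemma pairQP_wQ (l : ℕ) (x : QvLat n) (p : PLat n) :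
    pairQP A (wQ A ii l x) p = pairQP A x (wRevP A ii l p) := by
  induction l generalizing x with
  | zero => rfl
  | succ l ih => rw [wQ, Function.comp_apply, ih, pairQP_sQ, wRevP_succ]

variable {A} (hA : ∀ i, A i i = 2)
include hA

lemma wRevP_wP (l : ℕ) (p : PLat n) : wRevP A ii l (wP A ii l p) = p := by
  induction l generalizing p with
  | zero => rfl
  | succ l ih => rw [wP, Function.comp_apply, wRevP_succ, ih, sP_sP (hA _)]

lemma sum_range_pairQP_wRevP_smul (μ : PLat n) (k : ℕ) :
    ∑ l ∈ range k, pairQP A (coroot (ii (l+1))) (wRevP A ii (l+1) μ) • alP (ii (l+1))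
      = wRevP A ii k μ - μ := by
  simp only [wRevP_succ, ← sP_sub_self (hA _)]
  exact sum_range_sub (fun l => wRevP A ii l μ) k

end ReversedWord

lemma sum_range_sign_sub_zsmul {G : Type*} [AddCommGroup G] (f : ℕ → G) {k m : ℕ}
    (hk : k < m) :
    ∑ l ∈ range m, ((l : ℤ) - k).sign • f l
      = (∑ l ∈ range m, f l - ∑ l ∈ range (k+1), f l) - ∑ l ∈ range k, f l := by
  have below : ∀ l ∈ range k, ((l : ℤ) - k).sign • f l = -f l := fun l hl => by
    rw [Int.sign_eq_neg_one_of_neg (by simp at hl; omega), neg_one_zsmul]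
  have above : ∀ l ∈ Ico (k+1) m, ((l : ℤ) - k).sign • f l = f l := fun l hl => by
    rw [Int.sign_eq_one_of_pos (by simp at hl; omega), one_zsmul]
  rw [← sum_range_add_sum_Ico _ hk, sum_range_succ, sum_congr rfl below,
    sum_congr rfl above, sub_self, Int.sign_zero, zero_zsmul, add_zero, sum_neg_distrib,
    sum_Ico_eq_sub _ hk]
  abel

section Forms

variable {n m : ℕ} (A : Fin n → Fin n → ℤ) (d : Fin n → ℤ) (ii : ℕ → Fin n)

lemma LamF_eq_sum_pairQP (a b : Fin m → ℤ) :
    LamF A d ii m a b = ∑ k : Fin m, a k * (d (ii ((k:ℕ)+1)) *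
      pairQP A (coroot (ii ((k:ℕ)+1)))
        (∑ l : Fin m, (((k:ℕ):ℤ) - ((l:ℕ):ℤ)).sign • b l • alP (ii ((l:ℕ)+1)))) := by
  simp only [LamF, pairQP_sum, pairQP_zsmul, pairQP_coroot_alP, mul_sum]
  exact sum_congr rfl fun k _ => sum_congr rfl fun l _ => by ring

lemma pairAl_degP (a : Fin m → ℤ) (p : PLat n) :
    pairAl A d (degP ii m a) p
      = ∑ k : Fin m, a k * (d (ii ((k:ℕ)+1)) * pairQP A (coroot (ii ((k:ℕ)+1))) p) := by
  simp only [pairAl, degP, sum_mul, ite_mul, zero_mul]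
  rw [sum_comm]
  simp [sum_ite_eq]

variable {A} (hA : ∀ i, A i i = 2)
include hA

lemma sum_sign_smul_avec (lam : PLat n) {k : ℕ} (hk : k < m) :
    ∑ l : Fin m, (((k:ℕ):ℤ) - ((l:ℕ):ℤ)).sign • avec A ii m lam l • alP (ii ((l:ℕ)+1))
      = (wP A ii m lam + lam)
        - (wRevP A ii (k+1) (wP A ii m lam) + wRevP A ii k (wP A ii m lam)) := by
  let f : ℕ → PLat n := fun l =>
    pairQP A (coroot (ii (l+1))) (wRevP A ii (l+1) (wP A ii m lam)) • alP (ii (l+1))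
  have hterm : ∀ l : Fin m,
      (((k:ℕ):ℤ) - ((l:ℕ):ℤ)).sign • avec A ii m lam l • alP (ii ((l:ℕ)+1))
        = (((l:ℕ):ℤ) - k).sign • f l := fun l => by
    rw [avec, pairQP_wQ, neg_smul, smul_neg, ← neg_smul, ← Int.sign_neg, neg_sub]
  rw [sum_congr rfl fun l _ => hterm l,
    Fin.sum_univ_eq_sum_range (fun l => ((l:ℤ) - k).sign • f l), sum_range_sign_sub_zsmul f hk]
  simp only [f, sum_range_pairQP_wRevP_smul ii hA, wRevP_wP ii hA]
  abel

end Forms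

theorem Lambda_avec_general {n m : ℕ}
    (A : Fin n → Fin n → ℤ) (d : Fin n → ℤ)
    (hA : ∀ i, A i i = 2)
    (ii : ℕ → Fin n) (a : Fin m → ℤ) (lam : PLat n) :
    LamF A d ii m a (avec A ii m lam) =
      pairAl A d (degP ii m a) (wP A ii m lam + lam) := by
  rw [LamF_eq_sum_pairQP, pairAl_degP]
  refine sum_congr rfl fun k _ => ?_
  rw [sum_sign_smul_avec ii hA lam k.isLt, pairQP_sub, wRevP_succ,
    pairQP_coroot_sP_add_self (hA _), sub_zero]

/-- `Λ_𝐢(𝐚, 𝐚_λ) = (|𝐚|, w_m λ + λ)`. -/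
theorem Lambda_avec {n m : ℕ} (hm : 1 ≤ m)
    (A : Fin n → Fin n → ℤ) (d : Fin n → ℤ)
    (hA : ∀ i, A i i = 2) (hd : ∀ i, 0 < d i)
    (hsym : ∀ i j, d i * A i j = d j * A j i)
    (ii : ℕ → Fin n) (a : Fin m → ℤ) (lam : PLat n) :
    LamF A d ii m a (avec A ii m lam) =
      pairAl A d (degP ii m a) (wP A ii m lam + lam) :=
  Lambda_avec_general A d hA ii a lam
end

section
/- Let $I=\{1,\dots,n\}$, $m=2n$, and $\mathbf{i}=(1,2,\dots,n,1,2,\dots,n)$. For $1\le k\le n$ define ${}^*\varepsilon_k=\varepsilon_k+\sum_{\ell=1}^{k-1}a_{\ell k}\varepsilon_\ell$ and $\varepsilon_k^*=\varepsilon_k-\varepsilon_{k+n}+\sum_{\ell=k+1}^{n}a_{\ell k}\varepsilon_\ell$ in $\mathbb{Z}^{2n}$. Then for every $k\in\{1,\dots,n\}$ one has $\varphi_\mathbf{i}(\varepsilon_k)=-\rho_\mathbf{i}^-({}^*\varepsilon_k)$ and $\varphi_\mathbf{i}(\varepsilon_{n+k})=-\rho_\mathbf{i}^-(\varepsilon_k^*)$;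 equivalently, $(\rho_\mathbf{i}^-)^{-1}\varphi_\mathbf{i}(\mathbf{f},\mathbf{e})=-(\mathbf{e},0)^*-{}^*(\mathbf{f},0)$ for all $\mathbf{f},\mathbf{e}\in\mathbb{Z}^n$. -/
open Finset

variable {n : ℕ}

/-- `{}^*ε_k = ε_k + ∑_{ℓ=1}^{k-1} a_{ℓk} ε_ℓ` in `ℤ^{2n}` (for `1 ≤ k ≤ n`). -/
def starE (A : Fin n → Fin n → ℤ) (ii : ℕ → Fin n) (k : ℕ) : Fin (2*n) → ℤ :=
  eps (2*n) k + ∑ l : Fin n,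
    (if (l:ℕ)+1 < k then A (ii ((l:ℕ)+1)) (ii k) else 0) • eps (2*n) ((l:ℕ)+1)

/-- `ε_k^* = ε_k - ε_{k+n} + ∑_{ℓ=k+1}^{n} a_{ℓk} ε_ℓ` in `ℤ^{2n}` (for `1 ≤ k ≤ n`). -/
def costarE (A : Fin n → Fin n → ℤ) (ii : ℕ → Fin n) (k : ℕ) : Fin (2*n) → ℤ :=
  eps (2*n) k - eps (2*n) (k+n) + ∑ l : Fin n,
    (if k < (l:ℕ)+1 then A (ii ((l:ℕ)+1)) (ii k) else 0) • eps (2*n) ((l:ℕ)+1)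

/-! For the doubled word one has `k⁻ = 0`, `k⁺ = k + n` when `k ≤ n`, and `k⁻ = k - n`,
`k⁺ = 2n + 1` when `k > n`. Hence `ρ⁻` fixes `ε_1, …, ε_n`, which span the supports of
`{}^*ε_k` and of `ε_k^* + ε_{n+k}`, and both identities reduce to comparing coefficients.
In the second one the diagonal entry `a_{kk} = 2` turns the term `ε_{n+k}` of `ρ⁻(ε_{n+k})`
into `-ε_{n+k}`. -/

section Basis

variable {m : ℕ}

lemma eps_zero : eps m 0 = 0 := by
  funext j
  simp [eps]

lemma sum_smul_eps_apply (c : Fin n → ℤ) (j : Fin m) :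
    (∑ l : Fin n, c l • eps m ((l : ℕ) + 1)) j = if h : (j : ℕ) < n then c ⟨j, h⟩ else 0 := by
  simp only [Finset.sum_apply, Pi.smul_apply, eps, smul_eq_mul, mul_ite, mul_one, mul_zero,
    Nat.add_right_cancel_iff]
  split_ifs with h
  · rw [Finset.sum_eq_single ⟨j, h⟩] <;> simp +contextual [Fin.ext_iff, eq_comm]
  · exact Finset.sum_eq_zero fun l _ => if_neg (by omega)

lemma sum_smul_eps (c : Fin m → ℤ) : ∑ l : Fin m, c l • eps m ((l : ℕ) + 1) = c := by
  funext j
  rw [sum_smul_eps_apply, dif_pos j.isLt]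

lemma sum_eps_smul {k : ℕ} (hk1 : 1 ≤ k) (hk2 : k ≤ m) (F : ℕ → Fin m → ℤ) :
    ∑ l : Fin m, eps m k l • F ((l : ℕ) + 1) = F k := by
  rw [Finset.sum_eq_single ⟨k - 1, by omega⟩]
  · simp [eps, Nat.sub_add_cancel hk1]
  · intro l _ hl
    have hlk : (l : ℕ) + 1 ≠ k := fun h => hl (Fin.ext (by simp only; omega))
    simp [eps, hlk]
  · simp

variable (A : Fin n → Fin n → ℤ) (ii : ℕ → Fin n)

lemma phiMap_eps {k : ℕ} (hk1 : 1 ≤ k) (hk2 : k ≤ m) :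
    phiMap A ii m (eps m k) = phiE A ii m k :=
  sum_eps_smul hk1 hk2 _

lemma rhoMMap_eps {k : ℕ} (hk1 : 1 ≤ k) (hk2 : k ≤ m) :
    rhoMMap A ii m (eps m k) = rhoME A ii m k :=
  sum_eps_smul hk1 hk2 _

lemma rhoMMap_sub (u v : Fin m → ℤ) :
    rhoMMap A ii m (u - v) = rhoMMap A ii m u - rhoMMap A ii m v := by
  simp only [rhoMMap, Pi.sub_apply, sub_smul, Finset.sum_sub_distrib]

lemma rhoMMap_eq_self {v : Fin m → ℤ}
    (hv : ∀ k : Fin m, v k ≠ 0 → rhoME A ii m ((k : ℕ) + 1) = eps m ((k : ℕ) + 1)) :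
    rhoMMap A ii m v = v := by
  conv_rhs => rw [← sum_smul_eps v]
  refine Finset.sum_congr rfl fun k _ => ?_
  by_cases h : v k = 0
  · simp [h]
  · rw [hv k h]

end Basis

lemma kminus_eq {ii : ℕ → Fin n} {k p : ℕ} (hp : p = 0 ∨ 1 ≤ p ∧ p < k ∧ ii p = ii k)
    (hmax : ∀ l, 1 ≤ l → l < k → ii l = ii k → l ≤ p) : kminus ii k = p := by
  refine IsGreatest.csSup_eq ⟨?_, ?_⟩
  · rcases hp with rfl | hp
    exacts [Or.inr rfl, Or.inl hp]
  · rintro l (⟨hl1, hlk, hl⟩ | rfl)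
    exacts [hmax l hl1 hlk hl, Nat.zero_le p]

lemma kplus_eq {ii : ℕ → Fin n} {m k p : ℕ}
    (hp : p = m + 1 ∨ k < p ∧ p ≤ m ∧ ii p = ii k)
    (hmin : ∀ l, k < l → l ≤ m → ii l = ii k → p ≤ l) : kplus ii m k = p := by
  refine IsLeast.csInf_eq ⟨?_, ?_⟩
  · rcases hp with rfl | hp
    exacts [Or.inr rfl, Or.inl hp]
  · rintro l (⟨hkl, hlm, hl⟩ | rfl)
    · exact hmin l hkl hlm hl
    · rcases hp with rfl | hp
      exacts [le_rfl, by omega]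

section DoubledWord

variable {ii : ℕ → Fin n} (hii : ∀ k, 1 ≤ k → k ≤ 2 * n → (ii k : ℕ) = (k - 1) % n)
  (A : Fin n → Fin n → ℤ)
include hii

lemma doubled_word_eq_iff {k l : ℕ} (hk1 : 1 ≤ k) (hk2 : k ≤ 2 * n) (hl1 : 1 ≤ l)
    (hl2 : l ≤ 2 * n) : ii l = ii k ↔ l = k ∨ l = k + n ∨ k = l + n := by
  have hval : ∀ t, 1 ≤ t → t ≤ 2 * n → (ii t : ℕ) = if t ≤ n then t - 1 else t - 1 - n := by
    intro t ht1 ht2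
    rw [hii t ht1 ht2]
    split_ifs
    · exact Nat.mod_eq_of_lt (by omega)
    · rw [Nat.mod_eq_sub_mod (by omega), Nat.mod_eq_of_lt (by omega)]
  rw [Fin.ext_iff, hval l hl1 hl2, hval k hk1 hk2]
  split_ifs <;> omega

lemma doubled_word_add {k : ℕ} (hk1 : 1 ≤ k) (hk2 : k ≤ n) : ii (k + n) = ii k :=
  (doubled_word_eq_iff hii hk1 (by omega) (by omega) (by omega)).2 (by omega)

lemma kminus_doubled_of_le {k : ℕ} (hk1 : 1 ≤ k) (hk2 : k ≤ n) : kminus ii k = 0 :=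
  kminus_eq (Or.inl rfl) fun l hl1 hlk hl => by
    rw [doubled_word_eq_iff hii hk1 (by omega) hl1 (by omega)] at hl
    omega

lemma kminus_doubled_add {k : ℕ} (hk1 : 1 ≤ k) (hk2 : k ≤ n) : kminus ii (k + n) = k :=
  kminus_eq (Or.inr ⟨hk1, by omega, (doubled_word_add hii hk1 hk2).symm⟩) fun l hl1 hlk hl => by
    rw [doubled_word_eq_iff hii (by omega) (by omega) hl1 (by omega)] at hl
    omega

lemma kplus_doubled_of_le {k : ℕ} (hk1 : 1 ≤ k) (hk2 : k ≤ n) : kplus ii (2 * n) k = k + n :=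
  kplus_eq (Or.inr ⟨by omega, by omega, doubled_word_add hii hk1 hk2⟩) fun l hkl hlm hl => by
    rw [doubled_word_eq_iff hii hk1 (by omega) (by omega) hlm] at hl
    omega

lemma kplus_doubled_of_lt {k : ℕ} (hk1 : n < k) (hk2 : k ≤ 2 * n) :
    kplus ii (2 * n) k = 2 * n + 1 :=
  kplus_eq (Or.inl rfl) fun l hkl hlm hl => by
    rw [doubled_word_eq_iff hii (by omega) hk2 (by omega) hlm] at hl
    omega

lemma rhoME_doubled_of_le {k : ℕ} (hk : k ≤ n) :
    rhoME A ii (2 * n) k = eps (2 * n) k := by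
  rw [rhoME, sub_eq_self]
  refine Finset.sum_eq_zero fun l _ => ?_
  rw [if_neg, zero_smul]
  rintro ⟨hlk, hl⟩
  rw [kplus_doubled_of_le hii (by omega) (by omega)] at hl
  omega

lemma rhoMMap_doubled_eq_self {v : Fin (2 * n) → ℤ}
    (hv : ∀ j : Fin (2 * n), n ≤ j → v j = 0) : rhoMMap A ii (2 * n) v = v :=
  rhoMMap_eq_self A ii fun j hj =>
    rhoME_doubled_of_le hii A (by by_contra! h; exact hj (hv j (by omega)))

variable {k : ℕ} (hk1 : 1 ≤ k) (hk2 : k ≤ n)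
include hk1 hk2

lemma phiMap_doubled_eps :
    phiMap A ii (2 * n) (eps (2 * n) k) = -rhoMMap A ii (2 * n) (starE A ii k) := by
  have hstar : ∀ j : Fin (2 * n), n ≤ j → starE A ii k j = 0 := by
    intro j hj
    rw [starE, Pi.add_apply, sum_smul_eps_apply, dif_neg (by omega), add_zero, eps,
      if_neg (by omega)]
  rw [phiMap_eps A ii hk1 (by omega), rhoMMap_doubled_eq_self hii A hstar]
  funext j
  simp only [phiE, starE, kminus_doubled_of_le hii hk1 hk2, eps_zero, Pi.sub_apply,
    Pi.neg_apply, Pi.add_apply, Pi.zero_apply, sum_smul_eps_apply, j.isLt, dif_pos]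
  by_cases hj : (j : ℕ) < n
  · rw [kplus_doubled_of_le hii (by omega) (by omega), dif_pos hj]
    simp only [eps]
    split_ifs <;> omega
  · rw [kplus_doubled_of_lt hii (by omega) (by omega), dif_neg hj]
    simp only [eps]
    split_ifs <;> omega

lemma phiMap_doubled_eps_add (hA : ∀ i, A i i = 2) :
    phiMap A ii (2 * n) (eps (2 * n) (k + n)) = -rhoMMap A ii (2 * n) (costarE A ii k) := by
  set u : Fin (2 * n) → ℤ := eps (2 * n) k + ∑ l : Fin n,
    (if k < (l : ℕ) + 1 then A (ii ((l : ℕ) + 1)) (ii k) else 0) • eps (2 * n) ((l : ℕ) + 1)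
  have hu : ∀ j : Fin (2 * n), n ≤ j → u j = 0 := by
    intro j hj
    simp only [u]
    rw [Pi.add_apply, sum_smul_eps_apply, dif_neg (by omega), add_zero, eps, if_neg (by omega)]
  have hcostar : costarE A ii k = u - eps (2 * n) (k + n) := sub_add_eq_add_sub _ _ _
  rw [hcostar, rhoMMap_sub, rhoMMap_doubled_eq_self hii A hu,
    rhoMMap_eps A ii (by omega) (by omega), phiMap_eps A ii (by omega) (by omega), phiE,
    kminus_doubled_add hii hk1 hk2]
  funext j
  simp only [rhoME, u, doubled_word_add hii hk1 hk2, Pi.sub_apply, Pi.neg_apply, Pi.add_apply,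
    sum_smul_eps_apply, j.isLt, dif_pos]
  by_cases hj : (j : ℕ) < n
  · rw [kplus_doubled_of_le hii (by omega) (by omega), dif_pos hj]
    simp only [eps]
    split_ifs <;> omega
  · rw [kplus_doubled_of_lt hii (by omega) (by omega), dif_neg hj]
    obtain hjk | hjk := eq_or_ne ((j : ℕ) + 1) (k + n)
    · rw [hjk, doubled_word_add hii hk1 hk2, hA]
      simp only [eps, and_true]
      split_ifs <;> omega
    · simp only [eps, and_true]
      split_ifs <;> omega

end DoubledWord

theorem phi_doubled_word_general {n : ℕ}
    (A : Fin n → Fin n → ℤ)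
    (hA : ∀ i, A i i = 2)
    (ii : ℕ → Fin n)
    (hii : ∀ k, 1 ≤ k → k ≤ 2*n → (ii k : ℕ) = (k - 1) % n)
    (k : ℕ) (hk1 : 1 ≤ k) (hk2 : k ≤ n) :
    phiMap A ii (2*n) (eps (2*n) k) = -(rhoMMap A ii (2*n) (starE A ii k)) ∧
    phiMap A ii (2*n) (eps (2*n) (n+k)) = -(rhoMMap A ii (2*n) (costarE A ii k)) := by
  rw [add_comm n k]
  exact ⟨phiMap_doubled_eps hii A hk1 hk2, phiMap_doubled_eps_add hii A hk1 hk2 hA⟩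

/-- for `𝐢 = (1,…,n,1,…,n)` and `1 ≤ k ≤ n` one has
`φ_𝐢(ε_k) = -ρ_𝐢⁻({}^*ε_k)` and `φ_𝐢(ε_{n+k}) = -ρ_𝐢⁻(ε_k^*)`. -/
theorem phi_doubled_word {n : ℕ} (hn : 0 < n)
    (A : Fin n → Fin n → ℤ) (d : Fin n → ℤ)
    (hA : ∀ i, A i i = 2) (hd : ∀ i, 0 < d i)
    (hsym : ∀ i j, d i * A i j = d j * A j i)
    (ii : ℕ → Fin n)
    (hii : ∀ k, 1 ≤ k → k ≤ 2*n → (ii k : ℕ) = (k - 1) % n)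
    (k : ℕ) (hk1 : 1 ≤ k) (hk2 : k ≤ n) :
    phiMap A ii (2*n) (eps (2*n) k) = -(rhoMMap A ii (2*n) (starE A ii k)) ∧
    phiMap A ii (2*n) (eps (2*n) (n+k)) = -(rhoMMap A ii (2*n) (costarE A ii k)) :=
  phi_doubled_word_general A hA ii hii k hk1 hk2
end

section
/- Let $A=(a_{ij})_{1\le i,j\le n}$ be an integer matrix with $a_{ii}=2$ and $a_{ij}\le 0$ for $i\ne j$, symmetrizable by positive integers. Define the $n\times n$ matrix $B=(b_{\ell k})$ by $b_{\ell k}=\operatorname{sgn}(\ell-k)\,a_{\ell k}$, and let $\tilde B^\pm$ be the $2n\times n$ integer matrices whose first $n$ rows form $B$ and whose last $n$ rows form $\pm I_n$. Then $\mu_n(\mu_{n-1}(\cdots\mu_1(\tilde B^-)\cdots))=\tilde B^+$. -/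
/-- Matrix mutation `μ_k` of a `2n × n` integer matrix in direction `k ∈ {1,…,n}`. -/
def matMut {n : ℕ} (M : Matrix (Fin (2*n)) (Fin n) ℤ) (k : Fin n) :
    Matrix (Fin (2*n)) (Fin n) ℤ :=
  fun p j =>
    if (p : ℕ) = (k : ℕ) ∨ j = k then -M p j
    else M p j + (|M p k| * M (Fin.castLE (by omega) k) j
                  + M p k * |M (Fin.castLE (by omega) k) j|) / 2

/-- The `2n × n` matrix whose first `n` rows form the matrix `b_{ℓk} = sgn(ℓ-k) a_{ℓk}`
and whose last `n` rows form `s • Iₙ`. -/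
def tBpm {n : ℕ} (A : Fin n → Fin n → ℤ) (s : ℤ) : Matrix (Fin (2*n)) (Fin n) ℤ :=
  fun p j =>
    if h : (p : ℕ) < n then (((p:ℕ) : ℤ) - ((j:ℕ) : ℤ)).sign * A ⟨(p:ℕ), h⟩ j
    else if (p : ℕ) = n + (j : ℕ) then s else 0

/-!
Mutating at `k` when column `k` is nonpositive and row `k` nonnegative only flips the signs of
row and column `k`. For `B̃` built from an ordering of the vertices, this holds at the vertex
that comes first (as `A` is nonpositive off the diagonal), and flipping signs amounts to moving
that vertex to the end of the ordering and negating its frozen entry. Mutating at `1, …, n` in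
turn thus rotates the ordering once around, which gives back the original orientation, while
every frozen entry `-1` becomes `+1`.
-/

lemma abs_mul_add_mul_abs_eq_zero {x y : ℤ} (hx : x ≤ 0) (hy : 0 ≤ y) :
    |x| * y + x * |y| = 0 := by
  rw [abs_of_nonpos hx, abs_of_nonneg hy]
  ring

lemma matMut_eq_of_nonpos_of_nonneg {n : ℕ} (M : Matrix (Fin (2*n)) (Fin n) ℤ) (k : Fin n)
    (hcol : ∀ p : Fin (2*n), (p : ℕ) ≠ k → M p k ≤ 0)
    (hrow : ∀ j, j ≠ k → 0 ≤ M (Fin.castLE (by omega) k) j) :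
    matMut M k = fun (p : Fin (2*n)) j => if (p : ℕ) = k ∨ j = k then -M p j else M p j := by
  funext p j
  unfold matMut
  split_ifs with h
  · rfl
  · obtain ⟨hpk, hjk⟩ := not_or.mp h
    rw [abs_mul_add_mul_abs_eq_zero (hcol p hpk) (hrow j hjk)]
    simp

/-- `B̃` for the orientation of `A` given by the positions `pos`, with frozen part `diag s`. -/
def orientedMat {n : ℕ} (A : Fin n → Fin n → ℤ) (pos s : Fin n → ℤ) :
    Matrix (Fin (2*n)) (Fin n) ℤ :=
  fun p j =>
    if h : (p : ℕ) < n then (pos ⟨p, h⟩ - pos j).sign * A ⟨p, h⟩ j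
    else if (p : ℕ) = n + j then s j else 0

lemma tBpm_eq_orientedMat {n : ℕ} (A : Fin n → Fin n → ℤ) (s : ℤ) :
    tBpm A s = orientedMat A (fun i => (i : ℤ)) (fun _ => s) :=
  rfl

lemma orientedMat_add_const {n : ℕ} (A : Fin n → Fin n → ℤ) (pos s : Fin n → ℤ) (c : ℤ) :
    orientedMat A (fun i => pos i + c) s = orientedMat A pos s := by
  funext p j
  simp only [orientedMat, add_sub_add_right_eq_sub]

section orientedMat

variable {n : ℕ} (A : Fin n → Fin n → ℤ) (pos s : Fin n → ℤ) (k : Fin n)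

lemma orientedMat_apply_nonpos (hoff : ∀ i j, i ≠ j → A i j ≤ 0)
    (hfirst : ∀ j, j ≠ k → pos k < pos j) (hs : s k ≤ 0) (p : Fin (2*n)) (hpk : (p : ℕ) ≠ k) :
    orientedMat A pos s p k ≤ 0 := by
  unfold orientedMat
  split_ifs with hp
  · have hik : (⟨p, hp⟩ : Fin n) ≠ k := fun h => hpk (congrArg Fin.val h)
    rw [Int.sign_eq_one_of_pos (by linarith [hfirst _ hik]), one_mul]
    exact hoff _ k hik
  · exact hs
  · exact le_rfl

lemma orientedMat_castLE_apply_nonneg (hoff : ∀ i j, i ≠ j → A i j ≤ 0)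
    (hfirst : ∀ j, j ≠ k → pos k < pos j) (j : Fin n) (hjk : j ≠ k) :
    0 ≤ orientedMat A pos s (Fin.castLE (by omega) k) j := by
  simp only [orientedMat, Fin.val_castLE, dif_pos k.isLt]
  rw [Int.sign_eq_neg_one_of_neg (by linarith [hfirst j hjk]), neg_one_mul, neg_nonneg]
  exact hoff k j (Ne.symm hjk)

lemma matMut_orientedMat (hoff : ∀ i j, i ≠ j → A i j ≤ 0) (c : ℤ)
    (hfirst : ∀ j, j ≠ k → pos k < pos j) (hlast : ∀ j, j ≠ k → pos j < c) (hs : s k ≤ 0) :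
    matMut (orientedMat A pos s) k
      = orientedMat A (Function.update pos k c) (Function.update s k (-s k)) := by
  rw [matMut_eq_of_nonpos_of_nonneg _ k (orientedMat_apply_nonpos A pos s k hoff hfirst hs)
    (orientedMat_castLE_apply_nonneg A pos s k hoff hfirst)]
  funext p j
  simp only [orientedMat]
  by_cases hp : (p : ℕ) < n
  · have hpi : (p : ℕ) = k ↔ (⟨p, hp⟩ : Fin n) = k := by simp [Fin.ext_iff]
    simp only [dif_pos hp, hpi]
    generalize (⟨p, hp⟩ : Fin n) = i
    by_cases hik : i = k <;> by_cases hjk : j = k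
    · simp [hik, hjk]
    · simp only [hik, hjk, true_or, if_true, Function.update_self, Function.update_of_ne hjk]
      rw [Int.sign_eq_neg_one_of_neg (by linarith [hfirst j hjk]),
        Int.sign_eq_one_of_pos (by linarith [hlast j hjk])]
      ring
    · simp only [hik, hjk, or_true, if_true, Function.update_self, Function.update_of_ne hik]
      rw [Int.sign_eq_one_of_pos (by linarith [hfirst i hik]),
        Int.sign_eq_neg_one_of_neg (by linarith [hlast i hik])]
      ring
    · simp [hik, hjk, Function.update_of_ne]
  · simp only [dif_neg hp]
    by_cases hjk : j = k
    · subst hjk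
      have : (p : ℕ) ≠ j := by omega
      split_ifs <;> simp_all
    · have : (p : ℕ) ≠ k := by omega
      simp [this, hjk]

end orientedMat

def rotatedPos {n : ℕ} (k : ℕ) (i : Fin n) : ℤ :=
  if (i : ℕ) < k then i + n else i

def rotatedSign {n : ℕ} (k : ℕ) (i : Fin n) : ℤ :=
  if (i : ℕ) < k then 1 else -1

lemma matMut_orientedMat_rotated {n : ℕ} (A : Fin n → Fin n → ℤ)
    (hoff : ∀ i j, i ≠ j → A i j ≤ 0) (k : ℕ) (hk : k < n) :
    matMut (orientedMat A (rotatedPos k) (rotatedSign k)) ⟨k, hk⟩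
      = orientedMat A (rotatedPos (k + 1)) (rotatedSign (k + 1)) := by
  have hbounds : ∀ j : Fin n, j ≠ ⟨k, hk⟩ →
      rotatedPos k ⟨k, hk⟩ < rotatedPos k j ∧ rotatedPos k j < k + n := by
    intro j hj
    have : (j : ℕ) ≠ k := fun h => hj (Fin.ext h)
    simp only [rotatedPos]
    split_ifs <;> omega
  rw [matMut_orientedMat A _ _ ⟨k, hk⟩ hoff (k + n) (fun j hj => (hbounds j hj).1)
    (fun j hj => (hbounds j hj).2) (by simp [rotatedSign])]
  congr 1 <;> funext i <;>
    simp only [Function.update_apply, Fin.ext_iff, rotatedPos, rotatedSign] <;> split_ifs <;> omega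

lemma List.foldl_finRange_of_step {n : ℕ} {β : Type*} (f : β → Fin n → β) (x : ℕ → β)
    (hstep : ∀ k (hk : k < n), f (x k) ⟨k, hk⟩ = x (k + 1)) :
    (List.finRange n).foldl f (x 0) = x n := by
  suffices h : ∀ k ≤ n, ((List.finRange n).take k).foldl f (x 0) = x k by
    simpa [List.take_of_length_le] using h n le_rfl
  intro k hk
  induction k with
  | zero => rfl
  | succ k ih =>
    have hlen : k < (List.finRange n).length := by simpa using hk
    rw [List.take_add_one, List.foldl_append, ih (by omega), List.getElem?_eq_getElem hlen,
      List.getElem_finRange]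
    exact hstep k hk

theorem mutation_of_tB_minus_general {n : ℕ}
    (A : Fin n → Fin n → ℤ)
    (hoff : ∀ i j, i ≠ j → A i j ≤ 0) :
    (List.finRange n).foldl matMut (tBpm A (-1)) = tBpm A 1 := by
  have hstart : tBpm A (-1) = orientedMat A (rotatedPos 0) (rotatedSign 0) := rfl
  have hend : orientedMat A (rotatedPos n) (rotatedSign n) = tBpm A 1 := by
    have hpos : rotatedPos n = fun i : Fin n => (i : ℤ) + n := funext fun i => if_pos i.isLt
    have hsign : rotatedSign n = fun _ : Fin n => 1 := funext fun i => if_pos i.isLt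
    rw [hpos, hsign, orientedMat_add_const, tBpm_eq_orientedMat]
  rw [hstart, ← hend]
  exact List.foldl_finRange_of_step matMut
    (fun k => orientedMat A (rotatedPos k) (rotatedSign k)) (matMut_orientedMat_rotated A hoff)

/-- `μ_n(μ_{n-1}(⋯ μ_1(B̃⁻) ⋯)) = B̃⁺`. -/
theorem mutation_of_tB_minus {n : ℕ}
    (A : Fin n → Fin n → ℤ) (d : Fin n → ℤ)
    (hA : ∀ i, A i i = 2) (hoff : ∀ i j, i ≠ j → A i j ≤ 0)
    (hd : ∀ i, 0 < d i) (hsym : ∀ i j, d i * A i j = d j * A j i) :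
    (List.finRange n).foldl matMut (tBpm A (-1)) = tBpm A 1 :=
  mutation_of_tB_minus_general A hoff
end
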